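/- Vanishing of the partition function: for partitions λ, μ with at most n parts, if λ ⊄ μ then Z_λ(a_μ|a) = 0, where the substitution sets x_i = a_{n+1−i+μ_i}. -/

import Mathlib

/-- Exactly two of the four Booleans are `true` (the six-vertex/ice admissibility condition). -/
abbrev ExactlyTwo (a b c d : Bool) : Prop :=
  ((cond a 1 0) + (cond b 1 0) + (cond c 1 0) + (cond d 1 0) : ℕ) = 2

/-- Boltzmann weight of a rectilinear vertex on a row with parameter `x` in a column with
parameter `a`; `W N E S` record the presence of a hydrogen atom at the west, north, east,
south positions adjacent to the vertex.  The vertical molecule gets `x/a`, the molecule with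
hydrogens north and west gets `x/a - 1`, the other admissible molecules get `1`, and
inadmissible configurations get `0`. -/
noncomputable def rectWeight {K : Type*} [Field K] (x a : K) (W N E S : Bool) : K :=
  if W = true ∧ N = true ∧ E = false ∧ S = false then x / a - 1
  else if N = true ∧ S = true ∧ W = false ∧ E = false then x / a
  else if ExactlyTwo W N E S then 1 else 0

/-- A (pre-)state of the six-vertex model on an `n × m` grid of vertices: `s.1 i j = true`
iff the hydrogen of the horizontal edge west of the vertex in row `i`, column `j` sits at its
east end (`j = 0` and `j = m` are the boundary half-edges), and `s.2 i j = true` iff the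
hydrogen of the vertical edge north of the vertex in row `i`, column `j` sits at its south
end (`i = 0` and `i = n` are the boundary half-edges). -/
abbrev IceState (n m : ℕ) := (Fin n → Fin (m + 1) → Bool) × (Fin (n + 1) → Fin m → Bool)

/-- Hydrogen adjacent to the west of vertex `(i,j)`. -/
def occW {n m : ℕ} (s : IceState n m) (i : Fin n) (j : Fin m) : Bool := s.1 i j.castSucc
/-- Hydrogen adjacent to the east of vertex `(i,j)`. -/
def occE {n m : ℕ} (s : IceState n m) (i : Fin n) (j : Fin m) : Bool := !(s.1 i j.succ)
/-- Hydrogen adjacent to the north of vertex `(i,j)`. -/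
def occN {n m : ℕ} (s : IceState n m) (i : Fin n) (j : Fin m) : Bool := s.2 i.castSucc j
/-- Hydrogen adjacent to the south of vertex `(i,j)`. -/
def occS {n m : ℕ} (s : IceState n m) (i : Fin n) (j : Fin m) : Bool := !(s.2 i.succ j)

/-- Admissibility and the `λ`-boundary conditions: every vertex has exactly two adjacent
hydrogens; the left and right boundaries are filled with hydrogens; the lower boundary is
devoid of hydrogens; and the top boundary has hydrogens exactly away from the (`1`-based)
columns `λ_i + n + 1 - i`. -/
abbrev IsAdmissible (n m : ℕ) (lam : Fin n → ℕ) (s : IceState n m) : Prop :=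
  (∀ (i : Fin n) (j : Fin m), ExactlyTwo (occW s i j) (occN s i j) (occE s i j) (occS s i j)) ∧
  (∀ i : Fin n, s.1 i 0 = true) ∧
  (∀ i : Fin n, s.1 i (Fin.last m) = false) ∧
  (∀ j : Fin m, s.2 (Fin.last n) j = true) ∧
  (∀ j : Fin m, s.2 0 j = true ↔ ∀ i : Fin n, (j : ℕ) + 1 ≠ lam i + (n - (i : ℕ)))

/-- Generalized six-vertex partition function with `λ`-boundary conditions: the sum over all
admissible states of the product over all vertices of an arbitrary local weight `w`,
depending on the row, the column, and the local configuration `W N E S` of hydrogens. -/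
noncomputable def ZPFgen (n m : ℕ) (lam : Fin n → ℕ) {R : Type*} [CommRing R]
    (w : Fin n → Fin m → Bool → Bool → Bool → Bool → R) : R :=
  ∑ s ∈ Finset.univ.filter (IsAdmissible n m lam),
    ∏ i : Fin n, ∏ j : Fin m, w i j (occW s i j) (occN s i j) (occE s i j) (occS s i j)

/-- The six-vertex partition function `Z_λ(x|a)` with `λ`-boundary conditions and Boltzmann
weights `x_i/a_j` (vertical molecule), `x_i/a_j - 1` (hydrogens north and west), `1`
(otherwise), on an `n × m` grid (columns `1`-based: column `j : Fin m` has parameter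
`a (j+1)`). -/
noncomputable def ZPF (n m : ℕ) (lam : Fin n → ℕ) {K : Type*} [Field K]
    (x : Fin n → K) (a : ℤ → K) : K :=
  ZPFgen n m lam (fun i j W N E S => rectWeight (x i) (a ((j : ℤ) + 1)) W N E S)

/-!
Read the states as Gelfand–Tsetlin patterns: the columns whose vertical edge at level `t`
carries no hydrogen at its south end are the entries of row `t`. By the ice rule, the number
of entries left of any column drops by `0` or `1` from one level to the next, so level `t`
has `n - t` entries, and left of a given column it has at most as many as the top row.
The weight `x_i/a_j - 1` of the molecule with hydrogens west and north vanishes when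
`x_i = a_j`. If a state avoided that molecule at every vertex `(t, μ_t + n - t)`, a downward
induction would confine the `n - t` entries of level `t` strictly left of column
`μ_t + n - t + 1`. For `μ_t < λ_t` this contradicts the top boundary, which has only
`n - 1 - t` entries, namely `λ_i + n - i` for `i > t`, in that range.
-/

open Finset

theorem exactlyTwo_not_not_iff (W N E S : Bool) :
    ExactlyTwo W N (!E) (!S) ↔ (!W).toNat + (!N).toNat = (!E).toNat + (!S).toNat := by
  cases W <;> cases N <;> cases E <;> cases S <;> decide

theorem rectWeight_self_west_north {K : Type*} [Field K] {x : K} (hx : x ≠ 0) (E S : Bool) :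
    rectWeight x x true true E S = 0 := by
  cases E <;> cases S <;> simp [rectWeight, hx]

section ParticleCount

variable {m : ℕ}

def particleCount (v : Fin m → Bool) (c : ℕ) : ℕ :=
  #{j ∈ range c | ∃ h : j < m, v ⟨j, h⟩ = false}

theorem particleCount_succ (v : Fin m → Bool) (j : Fin m) :
    particleCount v (j + 1) = particleCount v j + (!v j).toNat := by
  rw [particleCount, range_add_one, filter_insert]
  cases hv : v j
  · rw [if_pos ⟨j.isLt, hv⟩, card_insert_of_notMem (by simp)]
    rfl
  · rw [if_neg (by simp [hv])]
    rfl

theorem particleCount_eq_of_forall_lt (v : Fin m → Bool) {c : ℕ}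
    (h : ∀ j, v j = false → (j : ℕ) < c) : particleCount v c = particleCount v m := by
  unfold particleCount
  congr 1
  ext j
  simp only [mem_filter, mem_range]
  constructor
  · rintro ⟨-, hj, hv⟩
    exact ⟨hj, hj, hv⟩
  · rintro ⟨-, hj, hv⟩
    exact ⟨h _ hv, hj, hv⟩

theorem particleCount_of_le (v : Fin m → Bool) {c : ℕ} (hc : m ≤ c) :
    particleCount v c = particleCount v m :=
  particleCount_eq_of_forall_lt v fun j _ => j.isLt.trans_le hc

theorem particleCount_lt_of_le (v : Fin m → Bool) {c : ℕ} {j : Fin m} (hjc : c ≤ j)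
    (hj : v j = false) : particleCount v c < particleCount v m := by
  apply card_lt_card
  refine ssubset_iff_of_subset ?_ |>.2 ⟨j, ?_, ?_⟩
  · intro k
    simp only [mem_filter, mem_range]
    rintro ⟨-, hk, hv⟩
    exact ⟨hk, hk, hv⟩
  · simp [hj]
  · simp [hjc]

end ParticleCount

section Admissible

variable {n m : ℕ} {lam : Fin n → ℕ} {s : IceState n m}

theorem IsAdmissible.particleCount_balance (hs : IsAdmissible n m lam s) (i : Fin n)
    (c : Fin (m + 1)) :
    particleCount (s.2 i.succ) c + (!s.1 i c).toNat = particleCount (s.2 i.castSucc) c := by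
  induction c using Fin.induction with
  | zero => simp [particleCount, hs.2.1 i]
  | succ j ih =>
    have hflux := (exactlyTwo_not_not_iff _ _ _ _).1 (hs.1 i j)
    simp only [occW, occN, Fin.val_castSucc] at hflux ih
    simp only [Fin.val_succ, particleCount_succ]
    omega

theorem IsAdmissible.particleCount_total (hs : IsAdmissible n m lam s) (lev : Fin (n + 1)) :
    particleCount (s.2 lev) m = n - lev := by
  induction lev using Fin.reverseInduction with
  | last =>
    rw [← particleCount_eq_of_forall_lt _ (c := 0) (fun j hj => by simp [hs.2.2.2.1 j] at hj)]
    simp [particleCount]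
  | cast i ih =>
    have := hs.particleCount_balance i (Fin.last m)
    simp only [Fin.val_last, hs.2.2.1 i, ih] at this
    simp only [Fin.val_succ, Fin.val_castSucc, Bool.not_false, Bool.toNat_true] at this ⊢
    omega

theorem IsAdmissible.particleCount_le_particleCount_zero (hs : IsAdmissible n m lam s)
    (lev : Fin (n + 1)) (c : ℕ) : particleCount (s.2 lev) c ≤ particleCount (s.2 0) c := by
  obtain hc | hc := le_total m c
  · rw [particleCount_of_le _ hc, particleCount_of_le _ hc, hs.particleCount_total,
      hs.particleCount_total, Fin.val_zero]
    omega
  induction lev using Fin.induction with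
  | zero => rfl
  | succ i ih =>
    exact (Nat.le.intro (hs.particleCount_balance i ⟨c, Nat.lt_succ_of_le hc⟩)).trans ih

theorem IsAdmissible.particleCount_zero_le_of_lt (hs : IsAdmissible n m lam s) (hlam : Antitone lam)
    (t : Fin n) {c : ℕ} (hc : c < lam t + (n - t)) : particleCount (s.2 0) c ≤ n - 1 - t := by
  rw [← Fin.card_Ioi t]
  refine (card_le_card fun j hj => ?_).trans (card_image_le (f := fun i => lam i + (n - i) - 1))
  obtain ⟨hjc, hjm, hj⟩ := by simpa only [mem_filter, mem_range] using hj
  obtain ⟨i, hi⟩ : ∃ i : Fin n, j + 1 = lam i + (n - i) := by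
    by_contra! h
    simp [(hs.2.2.2.2 ⟨j, hjm⟩).2 h] at hj
  refine mem_image.2 ⟨i, mem_Ioi.2 (lt_of_not_ge fun hit => ?_), by omega⟩
  have := hlam hit
  have := i.isLt
  omega

end Admissible

section Diagonal

variable {n m : ℕ} {lam mu : Fin n → ℕ} {s : IceState n m}

/-- The `1`-based column `j` of the vertex of row `t` at which `x_t = a_j`. -/
def diagCol (mu : Fin n → ℕ) : Fin (n + 1) → ℕ :=
  Fin.lastCases 0 fun t => mu t + (n - t)

@[simp] theorem diagCol_last (mu : Fin n → ℕ) : diagCol mu (Fin.last n) = 0 :=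
  Fin.lastCases_last

@[simp] theorem diagCol_castSucc (mu : Fin n → ℕ) (t : Fin n) :
    diagCol mu t.castSucc = mu t + (n - t) :=
  Fin.lastCases_castSucc t

theorem diagCol_succ_lt (hmu : Antitone mu) (i : Fin n) :
    diagCol mu i.succ < diagCol mu i.castSucc := by
  obtain ⟨k, hk⟩ | hk := Fin.eq_castSucc_or_eq_last i.succ
  · have hki : (k : ℕ) = i + 1 := by simpa using congrArg Fin.val hk.symm
    have := hmu (show i ≤ k from Fin.le_def.2 (by omega))
    have := k.isLt
    rw [hk, diagCol_castSucc, diagCol_castSucc]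
    omega
  · rw [hk, diagCol_last, diagCol_castSucc]
    omega

theorem IsAdmissible.particleCount_eq_and_west_of_entry_ge (hs : IsAdmissible n m lam s) (i : Fin n)
    (c : Fin (m + 1)) (hbelow : ∀ j, s.2 i.succ j = false → (j : ℕ) < c) {j : Fin m}
    (hcj : (c : ℕ) ≤ j) (hj : s.2 i.castSucc j = false) :
    particleCount (s.2 i.castSucc) c = n - (i + 1) ∧ s.1 i c = true := by
  have hbalance := hs.particleCount_balance i c
  have hsucc : particleCount (s.2 i.succ) c = n - (i + 1) := by
    rw [particleCount_eq_of_forall_lt _ hbelow, hs.particleCount_total, Fin.val_succ]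
  have hcast := particleCount_lt_of_le _ hcj hj
  rw [hs.particleCount_total, Fin.val_castSucc] at hcast
  have := i.isLt
  cases h : s.1 i c
  · simp only [h, Bool.not_false, Bool.toNat_true] at hbalance
    omega
  · simp only [h, Bool.not_true, Bool.toNat_false] at hbalance
    exact ⟨by omega, rfl⟩

theorem IsAdmissible.entry_lt_diagCol (hs : IsAdmissible n m lam s) (hmu : Antitone mu)
    (hno : ∀ (i : Fin n) (j : Fin m), (j : ℕ) + 1 = mu i + (n - i) →
      occW s i j = true → occN s i j = false)
    (lev : Fin (n + 1)) (j : Fin m) (hj : s.2 lev j = false) :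
    (j : ℕ) + 1 ≤ diagCol mu lev := by
  induction lev using Fin.reverseInduction generalizing j with
  | last => simp [hs.2.2.2.1 j] at hj
  | cast i ih =>
    rw [diagCol_castSucc]
    by_contra! hCj
    have hlt := diagCol_succ_lt hmu i
    rw [diagCol_castSucc] at hlt
    set C := mu i + (n - i)
    have hbelow : ∀ j', s.2 i.succ j' = false → (j' : ℕ) < C - 1 :=
      fun j' hj' => by have := ih j' hj'; omega
    have hCm : C - 1 < m := by omega
    have hW := (hs.particleCount_eq_and_west_of_entry_ge i ⟨C - 1, by omega⟩ hbelow
      (show C - 1 ≤ j by omega) hj)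
    -- no vanishing vertex at `(i, C - 1)`, so the west hydrogen forces an entry of level `i` there
    have hN : s.2 i.castSucc ⟨C - 1, hCm⟩ = false :=
      hno i ⟨C - 1, hCm⟩ (by simp only; omega) hW.2
    have hC := hs.particleCount_eq_and_west_of_entry_ge i ⟨C, by omega⟩
      (fun j' hj' => by have := hbelow j' hj'; simp only; omega) (show C ≤ j by omega) hj
    have hstep := particleCount_succ (s.2 i.castSucc) ⟨C - 1, hCm⟩
    simp only [hN, Bool.not_false, Bool.toNat_true, show C - 1 + 1 = C by omega] at hstep
    simp only at hW hC
    omega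

theorem IsAdmissible.exists_west_north_on_diag (hs : IsAdmissible n m lam s)
    (hlam : Antitone lam) (hmu : Antitone mu) {t : Fin n} (ht : mu t < lam t) :
    ∃ (i : Fin n) (j : Fin m),
      (j : ℕ) + 1 = mu i + (n - i) ∧ occW s i j = true ∧ occN s i j = true := by
  by_contra! hno
  simp only [ne_eq, Bool.not_eq_true] at hno
  have hentries : particleCount (s.2 t.castSucc) (mu t + (n - t)) = n - t := by
    rw [particleCount_eq_of_forall_lt _ fun j hj => ?_, hs.particleCount_total, Fin.val_castSucc]
    have := hs.entry_lt_diagCol hmu hno t.castSucc j hj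
    rw [diagCol_castSucc] at this
    omega
  have hle := hs.particleCount_le_particleCount_zero t.castSucc (mu t + (n - t))
  have htop := hs.particleCount_zero_le_of_lt hlam t (c := mu t + (n - t)) (by omega)
  have := t.isLt
  omega

end Diagonal

/-- vanishing of the partition function: if `λ ⊄ μ` then `Z_λ(a_μ|a) = 0`,
the substitution setting `x_i = a_{n+1-i+μ_i}` (`1`-based; `i : Fin n` is `0`-based). -/
theorem stmt11 {K : Type*} [Field K] (n : ℕ) (hn : 0 < n)
    (lam mu : Fin n → ℕ) (hlam : Antitone lam) (hmu : Antitone mu)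
    (hnotsub : ¬ ∀ i : Fin n, lam i ≤ mu i)
    (a : ℤ → K) (ha : ∀ k, a k ≠ 0) :
    ZPF n (n + lam ⟨0, hn⟩) lam (fun i => a ((n : ℤ) - (i : ℕ) + mu i)) a = 0 := by
  obtain ⟨t, ht⟩ := not_forall.1 hnotsub
  refine sum_eq_zero fun s hs => ?_
  obtain ⟨i, j, hdiag, hW, hN⟩ :=
    (mem_filter.1 hs).2.exists_west_north_on_diag hlam hmu (not_le.1 ht)
  refine prod_eq_zero (mem_univ i) (prod_eq_zero (mem_univ j) ?_)
  have hij : (n : ℤ) - (i : ℕ) + mu i = (j : ℤ) + 1 := by have := i.isLt; omega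
  dsimp only
  rw [hij, hW, hN]
  exact rectWeight_self_west_north (ha _) _ _
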